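/- Every formula of the extended local language L⁺[ψ] over an enlarged set of propositional variables is logically equivalent to a finite disjunction of normal form formulas ⋀_k ◯^{n_k} p_{i_k} ∧ ⋀_{k'} ¬◯^{n_{k'}} p_{i_{k'}} ∧ ⋀_m L_{r_m} θ_{j_m} ∧ ⋀_{m'} ¬L_{r_{m'}} θ_{j_{m'}}, where the new propositional variables Q_{r,θ} (for r in the index set and θ ∈ L[ψ]) are constrained by the equivalences L_rθ ↔ Q_{r,θ}. -/
import Mathlib


open MeasureTheory
open scoped ENNReal

/-- Formulas of dynamic probability logic. -/
inductive DPLF : Type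
  | var : ℕ → DPLF
  | neg : DPLF → DPLF
  | conj : DPLF → DPLF → DPLF
  | prob : ℚ → DPLF → DPLF
  | next : DPLF → DPLF
deriving DecidableEq

namespace DPLF

def falsum : DPLF := (var 0).conj (var 0).neg
def impl (φ ψ : DPLF) : DPLF := (φ.conj ψ.neg).neg
def disj (φ ψ : DPLF) : DPLF := (φ.neg.conj ψ.neg).neg
def iffF (φ ψ : DPLF) : DPLF := (φ.impl ψ).conj (ψ.impl φ)

/-- n-fold application of the next operator. -/
def nextn : ℕ → DPLF → DPLF
  | 0, φ => φ
  | n+1, φ => (nextn n φ).next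

/-- Iterated probability operators `L_{r₁ … r_k}`. -/
def probs : List ℚ → DPLF → DPLF
  | [], φ => φ
  | r :: rs, φ => prob r (probs rs φ)

/-- Propositional tautology: true under every Boolean valuation respecting ¬ and ∧. -/
def IsTautology (φ : DPLF) : Prop :=
  ∀ v : DPLF → Bool, (∀ ψ, v ψ.neg = !v ψ) →
    (∀ ψ χ, v (ψ.conj χ) = (v ψ && v χ)) → v φ = true

/-- Theoremhood in the Hilbert system `H⁻_DPL`. -/
inductive Hm : DPLF → Prop
  | taut {φ : DPLF} : IsTautology φ → Hm φ
  | fa1 : Hm (prob 0 falsum)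
  | fa2 {φ : DPLF} {r s : ℚ} : 0 ≤ r → r ≤ 1 → 0 ≤ s → s ≤ 1 → 1 < r + s →
      Hm (impl (prob r φ.neg) (prob s φ).neg)
  | fa3 {φ ψ : DPLF} {r s : ℚ} : 0 ≤ r → 0 ≤ s → r + s ≤ 1 →
      Hm (impl ((prob r (φ.conj ψ)).conj (prob s (φ.conj ψ.neg))) (prob (r+s) φ))
  | fa4 {φ ψ : DPLF} {r s : ℚ} : 0 ≤ r → 0 ≤ s → r + s ≤ 1 →
      Hm (impl ((prob r (φ.conj ψ)).neg.conj (prob s (φ.conj ψ.neg)).neg) (prob (r+s) φ).neg)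
  | mono {φ ψ : DPLF} {r : ℚ} : 0 ≤ r → r ≤ 1 →
      Hm (impl (prob 1 (impl φ ψ)) (impl (prob r φ) (prob r ψ)))
  | func {φ : DPLF} : Hm (iffF φ.neg.next φ.next.neg)
  | conjNext {φ ψ : DPLF} : Hm (iffF (φ.conj ψ).next (φ.next.conj ψ.next))
  | mp {φ ψ : DPLF} : Hm (impl φ ψ) → Hm φ → Hm ψ
  | arch {φ ψ : DPLF} {n : ℕ} {r : ℚ} : 0 ≤ r → r ≤ 1 →
      (∀ s : ℚ, 0 ≤ s → s < r → Hm (impl ψ (nextn n (prob s φ)))) →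
      Hm (impl ψ (nextn n (prob r φ)))
  | necL {φ : DPLF} : Hm φ → Hm (prob 1 φ)
  | necNext {φ : DPLF} : Hm φ → Hm φ.next

/-- Theoremhood in the Hilbert system `H_DPL` (with the generalized Archimedean rule). -/
inductive Hg : DPLF → Prop
  | taut {φ : DPLF} : IsTautology φ → Hg φ
  | fa1 : Hg (prob 0 falsum)
  | fa2 {φ : DPLF} {r s : ℚ} : 0 ≤ r → r ≤ 1 → 0 ≤ s → s ≤ 1 → 1 < r + s →
      Hg (impl (prob r φ.neg) (prob s φ).neg)
  | fa3 {φ ψ : DPLF} {r s : ℚ} : 0 ≤ r → 0 ≤ s → r + s ≤ 1 →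
      Hg (impl ((prob r (φ.conj ψ)).conj (prob s (φ.conj ψ.neg))) (prob (r+s) φ))
  | fa4 {φ ψ : DPLF} {r s : ℚ} : 0 ≤ r → 0 ≤ s → r + s ≤ 1 →
      Hg (impl ((prob r (φ.conj ψ)).neg.conj (prob s (φ.conj ψ.neg)).neg) (prob (r+s) φ).neg)
  | mono {φ ψ : DPLF} {r : ℚ} : 0 ≤ r → r ≤ 1 →
      Hg (impl (prob 1 (impl φ ψ)) (impl (prob r φ) (prob r ψ)))
  | func {φ : DPLF} : Hg (iffF φ.neg.next φ.next.neg)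
  | conjNext {φ ψ : DPLF} : Hg (iffF (φ.conj ψ).next (φ.next.conj ψ.next))
  | mp {φ ψ : DPLF} : Hg (impl φ ψ) → Hg φ → Hg ψ
  | garch {φ ψ : DPLF} {n : ℕ} {rs : List ℚ} {r : ℚ} : 0 ≤ r → r ≤ 1 →
      (∀ q ∈ rs, 0 ≤ q ∧ q ≤ 1) →
      (∀ s : ℚ, 0 ≤ s → s < r → Hg (impl ψ (nextn n (probs rs (prob s φ))))) →
      Hg (impl ψ (nextn n (probs rs (prob r φ))))
  | necL {φ : DPLF} : Hg φ → Hg (prob 1 φ)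
  | necNext {φ : DPLF} : Hg φ → Hg φ.next

/-- Derivability from assumptions in `H⁻_DPL` (no necessitation on assumptions). -/
inductive HmFrom (Γ : Set DPLF) : DPLF → Prop
  | assum {φ : DPLF} : φ ∈ Γ → HmFrom Γ φ
  | thm {φ : DPLF} : Hm φ → HmFrom Γ φ
  | mp {φ ψ : DPLF} : HmFrom Γ (impl φ ψ) → HmFrom Γ φ → HmFrom Γ ψ
  | arch {φ ψ : DPLF} {n : ℕ} {r : ℚ} : 0 ≤ r → r ≤ 1 →
      (∀ s : ℚ, 0 ≤ s → s < r → HmFrom Γ (impl ψ (nextn n (prob s φ)))) →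
      HmFrom Γ (impl ψ (nextn n (prob r φ)))

/-- Derivability from assumptions in `H_DPL` (no necessitation on assumptions). -/
inductive HgFrom (Γ : Set DPLF) : DPLF → Prop
  | assum {φ : DPLF} : φ ∈ Γ → HgFrom Γ φ
  | thm {φ : DPLF} : Hg φ → HgFrom Γ φ
  | mp {φ ψ : DPLF} : HgFrom Γ (impl φ ψ) → HgFrom Γ φ → HgFrom Γ ψ
  | garch {φ ψ : DPLF} {n : ℕ} {rs : List ℚ} {r : ℚ} : 0 ≤ r → r ≤ 1 →
      (∀ q ∈ rs, 0 ≤ q ∧ q ≤ 1) →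
      (∀ s : ℚ, 0 ≤ s → s < r → HgFrom Γ (impl ψ (nextn n (probs rs (prob s φ))))) →
      HgFrom Γ (impl ψ (nextn n (probs rs (prob r φ))))

/-- Consistency of a set of formulas in `H_DPL`. -/
def GConsistent (Γ : Set DPLF) : Prop := ¬ HgFrom Γ falsum

/-- Consistency of a set of formulas in `H⁻_DPL`. -/
def MConsistent (Γ : Set DPLF) : Prop := ¬ HmFrom Γ falsum

/-- Saturated sets of formulas. -/
structure Saturated (w : Set DPLF) : Prop where
  fincon : ∀ Γ : Set DPLF, Γ ⊆ w → Γ.Finite → GConsistent Γ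
  negcomplete : ∀ φ : DPLF, φ ∈ w ∨ φ.neg ∈ w
  archProp : ∀ (φ : DPLF) (n : ℕ) (rs : List ℚ) (r : ℚ), 0 ≤ r → r ≤ 1 →
    (∀ q ∈ rs, 0 ≤ q ∧ q ≤ 1) →
    (∀ s : ℚ, 0 ≤ s → s < r → nextn n (probs rs (prob s φ)) ∈ w) →
    nextn n (probs rs (prob r φ)) ∈ w

/-- The canonical space: all saturated sets. -/
def Omegac : Type := {w : Set DPLF // Saturated w}

/-- The basic set `[φ]` of saturated sets containing `φ`. -/
def box (φ : DPLF) : Set Omegac := {w | φ ∈ w.1}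

/-- The canonical base `B_c`. -/
def Bc : Set (Set Omegac) := {A | ∃ φ : DPLF, A = box φ}

/-- Dynamic Markov model. -/
structure DMM where
  World : Type
  σ : MeasurableSpace World
  T : World → @Measure World σ
  T_prob : ∀ w, IsProbabilityMeasure (T w)
  T_meas : ∀ A : Set World, MeasurableSet[σ] A →
    @Measurable World ℝ≥0∞ σ _ (fun w => T w A)
  f : World → World
  f_meas : @Measurable World World σ σ f
  v : ℕ → Set World
  v_meas : ∀ p : ℕ, MeasurableSet[σ] (v p)

/-- Satisfaction in a dynamic Markov model. -/
def Sat (M : DMM) : DPLF → M.World → Prop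
  | var p, w => w ∈ M.v p
  | neg φ, w => ¬ Sat M φ w
  | conj φ ψ, w => Sat M φ w ∧ Sat M ψ w
  | prob r φ, w => ENNReal.ofReal (r : ℝ) ≤ M.T w {u | Sat M φ u}
  | next φ, w => Sat M φ (M.f w)

end DPLF

namespace DPLF

/-- Normal form formulas: conjunctions of literals of the forms
◯ⁿp, ¬◯ⁿp, L_rθ, ¬L_rθ. -/
inductive NF : DPLF → Prop
  | nvar (n p : ℕ) : NF (nextn n (var p))
  | nnvar (n p : ℕ) : NF (nextn n (var p)).neg
  | plit (r : ℚ) (θ : DPLF) : NF (prob r θ)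
  | nplit (r : ℚ) (θ : DPLF) : NF (prob r θ).neg
  | conj {φ ψ : DPLF} : NF φ → NF ψ → NF (φ.conj ψ)

/-- Finite disjunctions of normal form formulas. -/
inductive DisjNF : DPLF → Prop
  | base {φ : DPLF} : NF φ → DisjNF φ
  | disj {φ ψ : DPLF} : DisjNF φ → DisjNF ψ → DisjNF (φ.disj ψ)

/-- Propositional variables occurring in a formula. -/
def fvars : DPLF → Set ℕ
  | var p => {p}
  | neg φ => fvars φ
  | conj φ ψ => fvars φ ∪ fvars ψ
  | prob _ φ => fvars φ
  | next φ => fvars φ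

lemma sat_nextn (M : DMM) (n : ℕ) (φ : DPLF) (w : M.World) :
    Sat M (nextn n φ) w ↔ Sat M φ (M.f^[n] w) := by
  induction n generalizing w with
  | zero => rfl
  | succ n ih =>
    show Sat M (nextn n φ) (M.f w) ↔ _
    rw [ih, Function.iterate_succ_apply]

lemma fvars_nextn (n : ℕ) (φ : DPLF) : fvars (nextn n φ) = fvars φ := by
  induction n with
  | zero => rfl
  | succ n ih => simpa [nextn, fvars] using ih

lemma sat_disj (M : DMM) (φ ψ : DPLF) (w : M.World) :
    Sat M (disj φ ψ) w ↔ Sat M φ w ∨ Sat M ψ w := by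
  simp only [disj, Sat]; tauto

lemma fvars_disj (φ ψ : DPLF) : fvars (disj φ ψ) = fvars φ ∪ fvars ψ := by
  simp [disj, fvars]

/-- Distribution: conjunction of two DisjNF is equivalent to a DisjNF. -/
lemma distrib {φ ψ : DPLF} (hφ : DisjNF φ) (hψ : DisjNF ψ) :
    ∃ χ : DPLF, DisjNF χ ∧ fvars χ ⊆ fvars φ ∪ fvars ψ ∧
      ∀ (M : DMM) (w : M.World), Sat M χ w ↔ (Sat M φ w ∧ Sat M ψ w) := by
  induction hφ with
  | @base φ hnf =>
    induction hψ with
    | @base ψ hnf' =>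
      exact ⟨φ.conj ψ, DisjNF.base (NF.conj hnf hnf'), by simp [fvars],
        fun M w => Iff.rfl⟩
    | @disj ψ₁ ψ₂ h1 h2 ih1 ih2 =>
      obtain ⟨χ₁, hχ₁, hf₁, hs₁⟩ := ih1
      obtain ⟨χ₂, hχ₂, hf₂, hs₂⟩ := ih2
      refine ⟨χ₁.disj χ₂, DisjNF.disj hχ₁ hχ₂, ?_, ?_⟩
      · rw [fvars_disj, fvars_disj]
        intro x hx
        rcases hx with hx | hx
        · rcases hf₁ hx with h | h
          · exact Or.inl h
          · exact Or.inr (Or.inl h)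
        · rcases hf₂ hx with h | h
          · exact Or.inl h
          · exact Or.inr (Or.inr h)
      · intro M w
        rw [sat_disj, hs₁, hs₂, sat_disj]
        tauto
  | @disj φ₁ φ₂ h1 h2 ih1 ih2 =>
    obtain ⟨χ₁, hχ₁, hf₁, hs₁⟩ := ih1
    obtain ⟨χ₂, hχ₂, hf₂, hs₂⟩ := ih2
    refine ⟨χ₁.disj χ₂, DisjNF.disj hχ₁ hχ₂, ?_, ?_⟩
    · rw [fvars_disj, fvars_disj]
      intro x hx
      rcases hx with hx | hx
      · rcases hf₁ hx with h | h
        · exact Or.inl (Or.inl h)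
        · exact Or.inr h
      · rcases hf₂ hx with h | h
        · exact Or.inl (Or.inr h)
        · exact Or.inr h
    · intro M w
      rw [sat_disj, hs₁, hs₂, sat_disj]
      tauto

/-- Negation of an NF formula is equivalent to a DisjNF. -/
lemma negNF {φ : DPLF} (h : NF φ) :
    ∃ χ : DPLF, DisjNF χ ∧ fvars χ ⊆ fvars φ ∧
      ∀ (M : DMM) (w : M.World), Sat M χ w ↔ ¬ Sat M φ w := by
  induction h with
  | nvar n p =>
    exact ⟨(nextn n (var p)).neg, DisjNF.base (NF.nnvar n p), by simp [fvars],
      fun M w => Iff.rfl⟩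
  | nnvar n p =>
    refine ⟨nextn n (var p), DisjNF.base (NF.nvar n p), by simp [fvars], fun M w => ?_⟩
    show _ ↔ ¬ ¬ _
    exact not_not.symm
  | plit r θ =>
    exact ⟨(prob r θ).neg, DisjNF.base (NF.nplit r θ), by simp [fvars], fun M w => Iff.rfl⟩
  | nplit r θ =>
    refine ⟨prob r θ, DisjNF.base (NF.plit r θ), by simp [fvars], fun M w => ?_⟩
    show _ ↔ ¬ ¬ _
    exact not_not.symm
  | @conj φ ψ hφ hψ ihφ ihψ =>
    obtain ⟨χ₁, hχ₁, hf₁, hs₁⟩ := ihφ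
    obtain ⟨χ₂, hχ₂, hf₂, hs₂⟩ := ihψ
    refine ⟨χ₁.disj χ₂, DisjNF.disj hχ₁ hχ₂, ?_, ?_⟩
    · rw [fvars_disj]
      exact Set.union_subset (hf₁.trans Set.subset_union_left)
        (hf₂.trans Set.subset_union_right)
    · intro M w
      rw [sat_disj, hs₁, hs₂]
      show _ ↔ ¬ (Sat M φ w ∧ Sat M ψ w)
      tauto

/-- Negation of a DisjNF formula is equivalent to a DisjNF. -/
lemma negDisjNF {φ : DPLF} (h : DisjNF φ) :
    ∃ χ : DPLF, DisjNF χ ∧ fvars χ ⊆ fvars φ ∧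
      ∀ (M : DMM) (w : M.World), Sat M χ w ↔ ¬ Sat M φ w := by
  induction h with
  | base hnf => exact negNF hnf
  | @disj φ₁ φ₂ h1 h2 ih1 ih2 =>
    obtain ⟨χ₁, hχ₁, hf₁, hs₁⟩ := ih1
    obtain ⟨χ₂, hχ₂, hf₂, hs₂⟩ := ih2
    obtain ⟨χ, hχ, hf, hs⟩ := distrib hχ₁ hχ₂
    refine ⟨χ, hχ, ?_, ?_⟩
    · rw [fvars_disj]
      refine hf.trans (Set.union_subset (hf₁.trans Set.subset_union_left)
        (hf₂.trans Set.subset_union_right))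
    · intro M w
      rw [hs, hs₁, hs₂, sat_disj]
      tauto

lemma main_nf (Q : ℚ × DPLF → ℕ) (φ : DPLF) (n : ℕ) :
    ∃ ψ' : DPLF, DisjNF ψ' ∧ fvars ψ' ⊆ fvars φ ∪ Set.range Q ∧
      ∀ M : DMM, (∀ (r : ℚ) (θ : DPLF), M.v (Q (r, θ)) = {w | Sat M (prob r θ) w}) →
        ∀ w : M.World, Sat M ψ' w ↔ Sat M φ (M.f^[n] w) := by
  induction φ generalizing n with
  | var p =>
    refine ⟨nextn n (var p), DisjNF.base (NF.nvar n p), ?_, fun M _ w => ?_⟩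
    · rw [fvars_nextn]; exact Set.subset_union_left
    · rw [sat_nextn]
  | neg φ ih =>
    obtain ⟨ψ', hψ, hf, hs⟩ := ih n
    obtain ⟨χ, hχ, hf', hs'⟩ := negDisjNF hψ
    refine ⟨χ, hχ, hf'.trans hf, fun M hv w => ?_⟩
    rw [hs' M w, hs M hv w]
    rfl
  | conj φ₁ φ₂ ih1 ih2 =>
    obtain ⟨ψ₁, hψ₁, hf₁, hs₁⟩ := ih1 n
    obtain ⟨ψ₂, hψ₂, hf₂, hs₂⟩ := ih2 n
    obtain ⟨χ, hχ, hf, hs⟩ := distrib hψ₁ hψ₂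
    refine ⟨χ, hχ, ?_, fun M hv w => ?_⟩
    · refine hf.trans (Set.union_subset (hf₁.trans ?_) (hf₂.trans ?_)) <;>
        simp only [fvars] <;> intro x hx <;>
        rcases hx with hx | hx <;> simp_all [Set.mem_union] <;> tauto
    · rw [hs M w, hs₁ M hv w, hs₂ M hv w]
      rfl
  | prob r θ _ =>
    refine ⟨nextn n (var (Q (r, θ))), DisjNF.base (NF.nvar n (Q (r, θ))), ?_, fun M hv w => ?_⟩
    · rw [fvars_nextn]
      intro x hx
      exact Or.inr ⟨(r, θ), hx.symm⟩
    · rw [sat_nextn]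
      show M.f^[n] w ∈ M.v (Q (r, θ)) ↔ _
      rw [hv r θ]
      rfl
  | next φ ih =>
    obtain ⟨ψ', hψ, hf, hs⟩ := ih (n + 1)
    refine ⟨ψ', hψ, hf, fun M hv w => ?_⟩
    rw [hs M hv w]
    show _ ↔ Sat M φ (M.f (M.f^[n] w))
    rw [Function.iterate_succ_apply']

/-- every formula is logically equivalent to a finite disjunction of normal
form formulas over the enlarged variable set, where the fresh variables Q_{r,θ} are
constrained by the equivalences L_rθ ↔ Q_{r,θ} (i.e. they are evaluated by ⟦L_rθ⟧). -/
theorem stmt17 (φ : DPLF) (Q : ℚ × DPLF → ℕ) (hQinj : Function.Injective Q)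
    (hQfresh : ∀ rθ : ℚ × DPLF, Q rθ ∉ fvars φ) :
    ∃ ψ' : DPLF, DisjNF ψ' ∧ fvars ψ' ⊆ fvars φ ∪ Set.range Q ∧
      ∀ M : DMM, (∀ (r : ℚ) (θ : DPLF), M.v (Q (r, θ)) = {w | Sat M (prob r θ) w}) →
        ∀ w : M.World, Sat M φ w ↔ Sat M ψ' w := by
  obtain ⟨ψ', hψ, hf, hs⟩ := main_nf Q φ 0
  exact ⟨ψ', hψ, hf, fun M hv w => (hs M hv w).symm⟩

end DPLF
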